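/- If m is a positive integer such that m + 1 is composite, then H_m(1) = 1 and H_m(n) = 0 for all integers n > 1. -/

import Mathlib

open Finset

/-- The Schemmel totient function: `L m 0 = 0`, `L m 1 = 1`, and for `n > 1`,
`L m n = ∏ p^(α-1) (p - m)` over the canonical factorization of `n` if every
prime divisor of `n` exceeds `m`, and `0` otherwise. -/
def L (m n : ℕ) : ℕ :=
  if n ≤ 1 then n
  else if ∀ p ∈ n.primeFactors, m < p then
    ∏ p ∈ n.primeFactors, p ^ (n.factorization p - 1) * (p - m)
  else 0

/-- `R m n` is the least positive `k` with `L_m^{(k)}(n) ∈ {0, 1}`. -/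
noncomputable def R (m n : ℕ) : ℕ :=
  sInf {k | 0 < k ∧ ((L m)^[k] n = 0 ∨ (L m)^[k] n = 1)}

/-- `H m n = L_m^{(R_m(n))}(n)`. -/
noncomputable def H (m n : ℕ) : ℕ := (L m)^[R m n] n

/-- `D m 1 = 0` and `D m n = ∑_{i=1}^{R_m(n)} L_m^{(i)}(n)` for `n > 1`. -/
noncomputable def D (m n : ℕ) : ℕ :=
  if n = 1 then 0 else ∑ i ∈ Finset.Icc 1 (R m n), (L m)^[i] n

/-!
Since `m + 1` is not prime, every factor `p ^ (α - 1) * (p - m)` of a nonzero `L m n` has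
`p - m ≥ 2`, so `L m n ≠ 1` whenever `n ≠ 1`; and `0 < p - m < p` gives `L m n < n` for `n > 1`.
The orbit of `n > 1` therefore decreases strictly without ever hitting `1`, so it reaches `0`,
which is then the first value in `{0, 1}`. The orbit of `1` is constant.
-/

theorem Nat.prod_primeFactors_pow_pred_mul_lt_self {n : ℕ} (hn : 1 < n) {g : ℕ → ℕ}
    (hg_pos : ∀ p ∈ n.primeFactors, 0 < g p) (hg_lt : ∀ p ∈ n.primeFactors, g p < p) :
    ∏ p ∈ n.primeFactors, p ^ (n.factorization p - 1) * g p < n := by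
  have hn0 : n ≠ 0 := by omega
  have hpow_pos : ∀ p ∈ n.primeFactors, 0 < p ^ (n.factorization p - 1) := fun p hp ↦
    pow_pos (Nat.prime_of_mem_primeFactors hp).pos _
  calc ∏ p ∈ n.primeFactors, p ^ (n.factorization p - 1) * g p
      < ∏ p ∈ n.primeFactors, p ^ (n.factorization p - 1) * p :=
        prod_lt_prod_of_nonempty (fun p hp ↦ Nat.mul_pos (hpow_pos p hp) (hg_pos p hp))
          (fun p hp ↦ Nat.mul_lt_mul_of_pos_left (hg_lt p hp) (hpow_pos p hp))
          (Nat.nonempty_primeFactors.2 hn)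
    _ = ∏ p ∈ n.primeFactors, p ^ n.factorization p :=
        prod_congr rfl fun p hp ↦
          pow_sub_one_mul (Finsupp.mem_support_iff.1 (by rwa [Nat.support_factorization])) p
    _ = n := (Nat.prod_primeFactors_pow_factorization hn0).symm

lemma L_one (m : ℕ) : L m 1 = 1 := rfl

lemma L_ne_one {m n : ℕ} (hcomp : ¬ (m + 1).Prime) (hn : n ≠ 1) : L m n ≠ 1 := by
  unfold L
  split_ifs with hle hbig
  · omega
  · rw [Ne, prod_eq_one_iff]
    intro hone
    obtain ⟨p, hp⟩ := Nat.nonempty_primeFactors.2 (show 1 < n by omega)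
    have hpm : p - m = 1 := Nat.eq_one_of_mul_eq_one_left (hone p hp)
    have hp_eq : p = m + 1 := by have := hbig p hp; omega
    exact hcomp (hp_eq ▸ Nat.prime_of_mem_primeFactors hp)
  · exact zero_ne_one

lemma L_lt_self {m n : ℕ} (hm : 0 < m) (hn : 1 < n) : L m n < n := by
  unfold L
  split_ifs with hle hbig
  · omega
  · exact Nat.prod_primeFactors_pow_pred_mul_lt_self hn (fun p hp ↦ by have := hbig p hp; omega)
      (fun p hp ↦ by have := hbig p hp; omega)
  · omega

lemma iterate_L_ne_one {m n : ℕ} (hcomp : ¬ (m + 1).Prime) (hn : n ≠ 1) (k : ℕ) :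
    (L m)^[k] n ≠ 1 := by
  induction k with
  | zero => exact hn
  | succ k ih => rw [Function.iterate_succ_apply']; exact L_ne_one hcomp ih

lemma exists_iterate_L_eq_zero {m n : ℕ} (hm : 0 < m) (hcomp : ¬ (m + 1).Prime) (hn : 1 < n) :
    ∃ k, 0 < k ∧ (L m)^[k] n = 0 := by
  induction n using Nat.strong_induction_on with
  | _ n ih =>
    rcases Nat.lt_or_ge 1 (L m n) with hL | hL
    · obtain ⟨k, hk, hk0⟩ := ih (L m n) (L_lt_self hm hn) hL
      exact ⟨k + 1, k.succ_pos, by rwa [Function.iterate_succ_apply]⟩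
    · have : L m n = 0 := by have := L_ne_one hcomp (show n ≠ 1 by omega); omega
      exact ⟨1, one_pos, this⟩

theorem H_of_composite_succ_general (m : ℕ) (hm : 0 < m) (hcomp : ¬ (m + 1).Prime) :
    H m 1 = 1 ∧ ∀ n : ℕ, 1 < n → H m n = 0 := by
  refine ⟨Function.iterate_fixed (L_one m) _, fun n hn ↦ ?_⟩
  obtain ⟨k, hk, hk0⟩ := exists_iterate_L_eq_zero hm hcomp hn
  have hR := (Nat.sInf_mem (⟨k, hk, Or.inl hk0⟩ :
    {k | 0 < k ∧ ((L m)^[k] n = 0 ∨ (L m)^[k] n = 1)}.Nonempty)).2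
  exact hR.resolve_right (iterate_L_ne_one hcomp (by omega) _)

theorem H_of_composite_succ (m : ℕ) (hm : 0 < m) (hcomp : ¬ (m + 1).Prime)
    (h1 : 1 < m + 1) : H m 1 = 1 ∧ ∀ n : ℕ, 1 < n → H m n = 0 :=
  H_of_composite_succ_general m hm hcomp
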